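/- arXiv:2207.04980 — 2 statements merged into one kernel-verified Lean document; each statement's English description precedes it below -/
import Mathlib

section
/- Flipping the digit immediately after the first occurrence of 0 in an eventually-zero binary sequence x does not change the parity of the position of the last 1 of x, provided x is not 0^∞ and the result is not 0^∞. -/
/-- A binary sequence (indexed from 1: index `n` is position `n+1`) is eventually zero. -/
def EvZero (x : ℕ → Bool) : Prop := ∃ N, ∀ n ≥ N, x n = false

/-- `n` is the index of the last 1 of `x` (the last 1 is at position `n+1`). -/
def LastOne (x : ℕ → Bool) (n : ℕ) : Prop := x n = true ∧ ∀ m > n, x m = false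

/-- Γ₊ : the zero sequence together with the sequences whose last 1 is at an odd position. -/
def GammaPlus (x : ℕ → Bool) : Prop :=
  (∀ n, x n = false) ∨ ∃ n, LastOne x n ∧ Odd (n + 1)

/-- Γ̃₊ = Γ₊ \ {0^∞} : the sequences whose last 1 is at an odd position. -/
def GammaTilde (x : ℕ → Bool) : Prop := GammaPlus x ∧ ¬ (∀ n, x n = false)

/-- Prepend the digit `d` to the sequence `x`. -/
def prepend (d : Bool) (x : ℕ → Bool) : ℕ → Bool := fun n => if n = 0 then d else x (n - 1)

/-- Flip the digit at position `k+2` (index `k+1`), i.e. the digit immediately after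
index `k`. -/
def flipAfter (x : ℕ → Bool) (k : ℕ) : ℕ → Bool :=
  fun n => if n = k + 1 then !x (k + 1) else x n

lemma lastOne_unique {y : ℕ → Bool} {a b : ℕ} (ha : LastOne y a) (hb : LastOne y b) :
    a = b := by
  by_contra h
  rcases Nat.lt_or_ge a b with hab | hab
  · have h1 := ha.2 b hab; rw [hb.1] at h1; simp at h1
  · have hba : b < a := by omega
    have h1 := hb.2 a hba; rw [ha.1] at h1; simp at h1

/-- Flipping the digit immediately after the first occurrence of 0 in an eventually-zero
sequence preserves the parity of the position of the last 1, provided neither the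
sequence nor the result is 0^∞. -/
theorem flipAfterFirstZero_parity (x : ℕ → Bool) (hx : EvZero x) (k : ℕ)
    (hk0 : x k = false) (hkfirst : ∀ m < k, x m = true)
    (hxne : ∃ n, x n = true) (hyne : ∃ n, flipAfter x k n = true)
    (n m : ℕ) (hn : LastOne x n) (hm : LastOne (flipAfter x k) m) :
    Odd (n + 1) ↔ Odd (m + 1) := by
  have hnk : n ≠ k := by
    intro h
    have h1 := hn.1
    rw [h, hk0] at h1
    simp at h1
  rcases lt_trichotomy n (k+1) with hlt | heq | hgt
  · -- n < k+1, n ≠ k, so n < k; in fact n = k-1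
    have hnk' : n < k := by omega
    have hne : n = k - 1 := by
      by_contra h
      have h1 : n + 1 < k := by omega
      have := hn.2 (n+1) (by omega)
      rw [hkfirst (n+1) h1] at this; simp at this
    -- x (k+1) = false since k+1 > n
    have hk1 : x (k+1) = false := hn.2 (k+1) (by omega)
    have : LastOne (flipAfter x k) (k+1) := by
      constructor
      · simp [flipAfter, hk1]
      · intro m' hm'
        simp only [flipAfter]
        rw [if_neg (by omega)]
        exact hn.2 m' (by omega)
    have hmeq := lastOne_unique hm this
    subst hmeq hne
    have hk1' : 1 ≤ k := by omega
    simp [Nat.odd_iff]; omega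
  · -- n = k+1 : flipped sequence has x(k+1) flipped to false
    subst heq
    have hflip : flipAfter x k (k+1) = false := by simp [flipAfter, hn.1]
    have hk1 : 1 ≤ k := by
      by_contra h
      have hk : k = 0 := by omega
      obtain ⟨j, hj⟩ := hyne
      rcases Nat.lt_trichotomy j (k+1) with h1 | h2 | h3
      · have hjk : j = k := by omega
        simp only [flipAfter, if_neg (by omega : j ≠ k+1)] at hj
        rw [hjk, hk0] at hj; simp at hj
      · rw [h2, hflip] at hj; simp at hj
      · simp only [flipAfter, if_neg (by omega : j ≠ k+1)] at hj
        rw [hn.2 j h3] at hj; simp at hj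
    have : LastOne (flipAfter x k) (k-1) := by
      constructor
      · simp only [flipAfter, if_neg (by omega : k-1 ≠ k+1)]
        exact hkfirst (k-1) (by omega)
      · intro m' hm'
        rcases eq_or_ne m' (k+1) with h | h
        · rw [h]; exact hflip
        · simp only [flipAfter, if_neg h]
          rcases eq_or_ne m' k with h' | h'
          · rw [h']; exact hk0
          · exact hn.2 m' (by omega)
    have hmeq := lastOne_unique hm this
    subst hmeq
    simp [Nat.odd_iff]; omega
  · -- n > k+1 : last one unchanged
    have : LastOne (flipAfter x k) n := by
      constructor
      · simp only [flipAfter, if_neg (by omega : n ≠ k+1)]; exact hn.1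
      · intro m' hm'
        simp only [flipAfter, if_neg (by omega : m' ≠ k+1)]
        exact hn.2 m' hm'
    have := lastOne_unique hm this
    subst this
    exact Iff.rfl
end

section
/- Let H be a real Hilbert space and let G be a group acting on H by isometries (not necessarily linearly). If some orbit G·x is bounded, then there exists a point c ∈ H fixed by every element of G (the circumcenter of the bounded orbit). -/
/-!
Let `R` be the Chebyshev radius of a bounded set `S`: the infimum of the radii of closed balls
containing it. In a Hilbert space, if `S` lies in the balls of radius `r` around `c₁` and `c₂`,
Apollonius' theorem puts `S` in the ball of radius `√(r² - (d/2)²)` around the midpoint, where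
`d = dist c₁ c₂`; hence `d² ≤ 4 (r² - R²)`. So the centres of balls of radius `R + 1/(n+1)`
containing `S` form nested closed sets with diameters tending to `0`, and completeness yields a
point of all of them: the unique centre of a ball of radius `R` containing `S`. Isometries
preserving `S` permute these centres, hence fix that one.
-/

open Bornology Filter Metric Topology
open scoped Pointwise

section PseudoMetricSpace

variable {X : Type*} [PseudoMetricSpace X]

def enclosingCenters (S : Set X) (r : ℝ) : Set X := {c | S ⊆ closedBall c r}

noncomputable def chebyshevRadius (S : Set X) : ℝ := sInf {r | (enclosingCenters S r).Nonempty}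

variable {S : Set X} {r : ℝ} {c : X}

lemma mem_enclosingCenters : c ∈ enclosingCenters S r ↔ ∀ y ∈ S, dist y c ≤ r := Iff.rfl

lemma isClosed_enclosingCenters (S : Set X) (r : ℝ) : IsClosed (enclosingCenters S r) := by
  have : enclosingCenters S r = ⋂ y ∈ S, closedBall y r := by
    ext c
    simp [mem_enclosingCenters, dist_comm]
  rw [this]
  exact isClosed_biInter fun y _ => isClosed_closedBall

lemma enclosingCenters_mono (S : Set X) {r r' : ℝ} (h : r ≤ r') :
    enclosingCenters S r ⊆ enclosingCenters S r' :=
  fun _ hc => hc.trans (closedBall_subset_closedBall h)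

lemma nonneg_of_mem_enclosingCenters (hne : S.Nonempty) (hc : c ∈ enclosingCenters S r) :
    0 ≤ r :=
  dist_nonneg.trans (hc hne.some_mem)

lemma chebyshevRadius_nonneg (hne : S.Nonempty) : 0 ≤ chebyshevRadius S :=
  Real.sInf_nonneg fun _ ⟨_, hc⟩ => nonneg_of_mem_enclosingCenters hne hc

lemma chebyshevRadius_le (hne : S.Nonempty) (hc : c ∈ enclosingCenters S r) :
    chebyshevRadius S ≤ r :=
  csInf_le ⟨0, fun _ ⟨_, hc'⟩ => nonneg_of_mem_enclosingCenters hne hc'⟩ ⟨c, hc⟩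

lemma enclosingCenters_nonempty_of_chebyshevRadius_lt (hS : IsBounded S) (hne : S.Nonempty)
    (h : chebyshevRadius S < r) : (enclosingCenters S r).Nonempty := by
  obtain ⟨ρ, hρ⟩ := hS.subset_closedBall hne.some
  have hradii : {r | (enclosingCenters S r).Nonempty}.Nonempty := ⟨ρ, hne.some, hρ⟩
  obtain ⟨ρ', ⟨c, hc⟩, hρ'⟩ := exists_lt_of_csInf_lt hradii h
  exact ⟨c, enclosingCenters_mono S hρ'.le hc⟩

lemma smul_mem_enclosingCenters {G : Type*} [Group G] [MulAction G X] [IsIsometricSMul G X]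
    (hS : ∀ g : G, g • S = S) (g : G) (hc : c ∈ enclosingCenters S r) :
    g • c ∈ enclosingCenters S r := by
  change S ⊆ closedBall (g • c) r
  rw [← Metric.smul_closedBall, ← hS g]
  exact Set.smul_set_mono hc

end PseudoMetricSpace

section InnerProductSpace

variable {H : Type*} [NormedAddCommGroup H] [InnerProductSpace ℝ H] {S : Set H} {r : ℝ}
  {c₁ c₂ : H}

lemma midpoint_mem_enclosingCenters (h₁ : c₁ ∈ enclosingCenters S r)
    (h₂ : c₂ ∈ enclosingCenters S r) :
    midpoint ℝ c₁ c₂ ∈ enclosingCenters S √(r ^ 2 - (dist c₁ c₂ / 2) ^ 2) := by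
  intro y hy
  rw [mem_closedBall]
  apply Real.le_sqrt_of_sq_le
  have hy₁ : dist y c₁ ^ 2 ≤ r ^ 2 := pow_le_pow_left₀ dist_nonneg (h₁ hy) 2
  have hy₂ : dist y c₂ ^ 2 ≤ r ^ 2 := pow_le_pow_left₀ dist_nonneg (h₂ hy) 2
  have := EuclideanGeometry.dist_sq_add_dist_sq_eq_two_mul_dist_midpoint_sq_add_half_dist_sq
    y c₁ c₂
  linarith

lemma dist_sq_le_of_mem_enclosingCenters (hne : S.Nonempty) (h₁ : c₁ ∈ enclosingCenters S r)
    (h₂ : c₂ ∈ enclosingCenters S r) :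
    dist c₁ c₂ ^ 2 ≤ 4 * (r ^ 2 - chebyshevRadius S ^ 2) := by
  have hR := chebyshevRadius_le hne (midpoint_mem_enclosingCenters h₁ h₂)
  obtain ⟨y, hy⟩ := hne
  have hd : dist c₁ c₂ ≤ 2 * r := by
    linarith [dist_triangle_left c₁ c₂ y, mem_enclosingCenters.mp h₁ y hy,
      mem_enclosingCenters.mp h₂ y hy]
  have hd₀ : 0 ≤ dist c₁ c₂ := dist_nonneg
  have := (Real.le_sqrt (chebyshevRadius_nonneg ⟨y, hy⟩) (by nlinarith)).mp hR
  linarith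

lemma enclosingCenters_chebyshevRadius_subsingleton (hne : S.Nonempty) :
    (enclosingCenters S (chebyshevRadius S)).Subsingleton := fun c₁ h₁ c₂ h₂ => by
  have := dist_sq_le_of_mem_enclosingCenters hne h₁ h₂
  rw [sub_self, mul_zero] at this
  exact dist_le_zero.mp (by nlinarith [dist_nonneg (x := c₁) (y := c₂)])

lemma enclosingCenters_chebyshevRadius_nonempty [CompleteSpace H] (hS : IsBounded S)
    (hne : S.Nonempty) : (enclosingCenters S (chebyshevRadius S)).Nonempty := by
  set R := chebyshevRadius S
  set s : ℕ → Set H := fun n => enclosingCenters S (R + 1 / (n + 1))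
  have hs_anti : Antitone s := fun m n hmn => enclosingCenters_mono S (by gcongr)
  have hs_ne (n : ℕ) : (s n).Nonempty :=
    enclosingCenters_nonempty_of_chebyshevRadius_lt hS hne
      (lt_add_of_pos_right R Nat.one_div_pos_of_nat)
  have hs_bdd (n : ℕ) : IsBounded (s n) := isBounded_iff.2 ⟨_, fun c₁ h₁ c₂ h₂ =>
    Real.le_sqrt_of_sq_le (dist_sq_le_of_mem_enclosingCenters hne h₁ h₂)⟩
  have hdiam (n : ℕ) : diam (s n) ≤ √(4 * ((R + 1 / (n + 1)) ^ 2 - R ^ 2)) :=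
    diam_le_of_forall_dist_le (Real.sqrt_nonneg _) fun c₁ h₁ c₂ h₂ =>
      Real.le_sqrt_of_sq_le (dist_sq_le_of_mem_enclosingCenters hne h₁ h₂)
  have hradius : Tendsto (fun n : ℕ => R + 1 / (n + 1)) atTop (𝓝 R) := by
    simpa using tendsto_one_div_add_atTop_nhds_zero_nat.const_add R
  have hbound :
      Tendsto (fun n : ℕ => √(4 * ((R + 1 / (n + 1)) ^ 2 - R ^ 2))) atTop (𝓝 0) := by
    have := ((hradius.pow 2).sub_const (R ^ 2) |>.const_mul 4).sqrt
    rwa [sub_self, mul_zero, Real.sqrt_zero] at this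
  obtain ⟨c, hc⟩ := nonempty_iInter_of_nonempty_biInter (fun n => isClosed_enclosingCenters S _)
    hs_bdd (fun N => (hs_ne N).mono (Set.subset_iInter₂ fun n hn => hs_anti hn))
    (squeeze_zero (fun n => diam_nonneg) hdiam hbound)
  refine ⟨c, fun y hy => ?_⟩
  rw [mem_closedBall]
  exact ge_of_tendsto' hradius fun n => Set.mem_iInter.mp hc n hy

theorem exists_smul_eq_self_of_isBounded {G : Type*} [Group G] [MulAction G H]
    [IsIsometricSMul G H] [CompleteSpace H] (hS : IsBounded S) (hne : S.Nonempty)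
    (hinv : ∀ g : G, g • S = S) : ∃ c : H, ∀ g : G, g • c = c := by
  obtain ⟨c, hc⟩ := enclosingCenters_chebyshevRadius_nonempty hS hne
  exact ⟨c, fun g => enclosingCenters_chebyshevRadius_subsingleton hne
    (smul_mem_enclosingCenters hinv g hc) hc⟩

end InnerProductSpace

/-- A group acting by isometries on a real Hilbert space with a bounded orbit has a
global fixed point (the circumcenter of the orbit). -/
theorem fixed_point_of_bounded_orbit {G H : Type*} [Group G] [NormedAddCommGroup H]
    [InnerProductSpace ℝ H] [CompleteSpace H] [MulAction G H]
    (hiso : ∀ (g : G) (u v : H), dist (g • u) (g • v) = dist u v)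
    (x : H) (hbdd : Bornology.IsBounded (MulAction.orbit G x)) :
    ∃ c : H, ∀ g : G, g • c = c := by
  have : IsIsometricSMul G H := ⟨fun g => Isometry.of_dist_eq (hiso g)⟩
  exact exists_smul_eq_self_of_isBounded hbdd (MulAction.nonempty_orbit x)
    (fun g => MulAction.smul_orbit g x)
end
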